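/- Antipode identity: for any nonempty index k = (k₁,...,k_r), Σ_{i=0}^{r} (−1)^{r−i} [k₁,...,k_i] ∗ [k_r,...,k_{i+1}]^⋆ = 0, and for k = ∅ the sum equals [∅]. -/
import Mathlib


/-- An index: a finite sequence of positive integers. -/
abbrev Idx := List ℕ+

/-- The `ℚ`-linear space `ℐ` spanned by formal symbols of indices. -/
abbrev IdxAlg := Idx →₀ ℚ

/-- Auxiliary harmonic product on indices *stored in reversed order*, so that the
recursion acts on the last components of the original indices, as in the paper:
`[k,k]∗[l,l] = [([k,k]∗[l]),l] + [([k]∗[l,l]),k] + [([k]∗[l]),k+l]`. -/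
noncomputable def hpAux : Idx → Idx → IdxAlg
  | [], l => Finsupp.single l 1
  | a :: as, [] => Finsupp.single (a :: as) 1
  | a :: as, b :: bs =>
      Finsupp.mapDomain (a :: ·) (hpAux as (b :: bs)) +
      Finsupp.mapDomain (b :: ·) (hpAux (a :: as) bs) +
      Finsupp.mapDomain ((a + b) :: ·) (hpAux as bs)
termination_by k l => k.length + l.length

/-- The harmonic (stuffle) product of two index symbols. -/
noncomputable def hp (k l : Idx) : IdxAlg :=
  Finsupp.mapDomain List.reverse (hpAux k.reverse l.reverse)

/-- The bilinear extension of the harmonic product to `ℐ`. -/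
noncomputable def hmul (u v : IdxAlg) : IdxAlg :=
  u.sum fun k ck => v.sum fun l cl => (ck * cl) • hp k l

/-- The star-sum `[l₁,…,l_s]^⋆`: the sum of all `[l₁□⋯□l_s]` with each `□` replaced by
`+` or `,`. -/
noncomputable def starSym : Idx → IdxAlg
  | [] => Finsupp.single [] 1
  | [a] => Finsupp.single [a] 1
  | a :: b :: rest =>
      Finsupp.mapDomain (a :: ·) (starSym (b :: rest)) + starSym ((a + b) :: rest)
termination_by l => l.length

/-- The linear map `S̃ : ℐ → ℐ` with `S̃([k]) = (−1)^{dep k}[k]^⋆`. -/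
noncomputable def Stilde (u : IdxAlg) : IdxAlg :=
  u.sum fun k c => ((-1 : ℚ) ^ k.length * c) • starSym k

-- ====== auxiliary machinery ======

lemma hpAux_nil (l : Idx) : hpAux [] l = Finsupp.single l 1 := by rw [hpAux]
lemma hpAux_cons_nil (a : ℕ+) (as : Idx) : hpAux (a::as) [] = Finsupp.single (a::as) 1 := by
  rw [hpAux]
lemma hpAux_cons_cons (a b : ℕ+) (as bs : Idx) : hpAux (a::as) (b::bs) =
    Finsupp.mapDomain (a :: ·) (hpAux as (b :: bs)) +
    Finsupp.mapDomain (b :: ·) (hpAux (a :: as) bs) +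
    Finsupp.mapDomain ((a + b) :: ·) (hpAux as bs) := by rw [hpAux]
lemma hpAux_nil_right (u : Idx) : hpAux u [] = Finsupp.single u 1 := by
  cases u with
  | nil => rw [hpAux]
  | cons a as => rw [hpAux]

lemma md_comm (x y : ℕ+) (s : IdxAlg) :
    Finsupp.mapDomain (x :: ·) (Finsupp.mapDomain (· ++ [y]) s)
      = Finsupp.mapDomain (· ++ [y]) (Finsupp.mapDomain (x :: ·) s) := by
  rw [← Finsupp.mapDomain_comp, ← Finsupp.mapDomain_comp]
  rfl

lemma hpAux_concat (a b : ℕ+) : ∀ (n : ℕ) (U V : Idx), U.length + V.length ≤ n →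
    hpAux (U ++ [a]) (V ++ [b]) =
      Finsupp.mapDomain (· ++ [a]) (hpAux U (V ++ [b])) +
      Finsupp.mapDomain (· ++ [b]) (hpAux (U ++ [a]) V) +
      Finsupp.mapDomain (· ++ [a + b]) (hpAux U V) := by
  intro n
  induction n with
  | zero =>
    intro U V h
    have hU : U = [] := by cases U <;> simp_all
    have hV : V = [] := by cases V <;> simp_all
    subst hU; subst hV
    simp only [List.nil_append, List.cons_append, hpAux_cons_cons, hpAux_nil, hpAux_cons_nil,
      hpAux_nil_right, Finsupp.mapDomain_add, Finsupp.mapDomain_single]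
    abel
  | succ n ih =>
    intro U V h
    match U, V with
    | [], [] =>
      simp only [List.nil_append, List.cons_append, hpAux_cons_cons, hpAux_nil, hpAux_cons_nil,
        hpAux_nil_right, Finsupp.mapDomain_add, Finsupp.mapDomain_single]
      abel
    | [], v :: vs =>
      have h1 := ih [] vs (by simp at h ⊢; omega)
      simp only [List.nil_append, List.cons_append, List.append_nil] at h1 ⊢
      simp only [hpAux_cons_cons, hpAux_nil, hpAux_cons_nil, hpAux_nil_right]
      rw [h1]
      simp only [hpAux_cons_cons, hpAux_nil, hpAux_cons_nil, hpAux_nil_right,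
        Finsupp.mapDomain_add, Finsupp.mapDomain_single, md_comm, List.cons_append,
        List.nil_append, List.append_assoc, List.singleton_append]
      abel
    | u :: us, [] =>
      have h1 := ih us [] (by simp at h ⊢; omega)
      simp only [List.nil_append, List.cons_append, List.append_nil] at h1 ⊢
      simp only [hpAux_cons_cons, hpAux_nil, hpAux_cons_nil, hpAux_nil_right]
      rw [h1]
      simp only [hpAux_cons_cons, hpAux_nil, hpAux_cons_nil, hpAux_nil_right,
        Finsupp.mapDomain_add, Finsupp.mapDomain_single, md_comm, List.cons_append,
        List.nil_append, List.append_assoc, List.singleton_append]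
      abel
    | u :: us, v :: vs =>
      have h1 := ih us (v :: vs) (by simp at h ⊢; omega)
      have h2 := ih (u :: us) vs (by simp at h ⊢; omega)
      have h3 := ih us vs (by simp at h ⊢; omega)
      simp only [List.nil_append, List.cons_append, List.append_nil] at h1 h2 h3 ⊢
      simp only [hpAux_cons_cons, hpAux_nil, hpAux_cons_nil, hpAux_nil_right]
      rw [h1, h2, h3]
      simp only [hpAux_cons_cons, hpAux_nil, hpAux_cons_nil, hpAux_nil_right,
        Finsupp.mapDomain_add, Finsupp.mapDomain_single, md_comm, List.cons_append,
        List.nil_append, List.append_assoc, List.singleton_append]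
      abel

lemma rev_Ap (y : ℕ+) (s : IdxAlg) :
    Finsupp.mapDomain List.reverse (Finsupp.mapDomain (· ++ [y]) s)
      = Finsupp.mapDomain (y :: ·) (Finsupp.mapDomain List.reverse s) := by
  rw [← Finsupp.mapDomain_comp, ← Finsupp.mapDomain_comp]
  congr 1
  funext l
  simp

lemma hp_nil_left (l : Idx) : hp [] l = Finsupp.single l 1 := by
  simp [hp, hpAux_nil, Finsupp.mapDomain_single]

lemma hp_nil_right (u : Idx) : hp u [] = Finsupp.single u 1 := by
  simp [hp, hpAux_nil_right, Finsupp.mapDomain_single]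

lemma hp_cons_cons (a b : ℕ+) (k l : Idx) :
    hp (a :: k) (b :: l) =
      Finsupp.mapDomain (a :: ·) (hp k (b :: l)) +
      Finsupp.mapDomain (b :: ·) (hp (a :: k) l) +
      Finsupp.mapDomain ((a + b) :: ·) (hp k l) := by
  unfold hp
  rw [List.reverse_cons, List.reverse_cons, hpAux_concat a b (k.reverse.length + l.reverse.length)
    k.reverse l.reverse le_rfl]
  rw [Finsupp.mapDomain_add, Finsupp.mapDomain_add, rev_Ap, rev_Ap, rev_Ap]

noncomputable def Cns (a : ℕ+) : IdxAlg →ₗ[ℚ] IdxAlg := Finsupp.lmapDomain ℚ ℚ (a :: ·)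

lemma Cns_apply (a : ℕ+) (x : IdxAlg) : Cns a x = Finsupp.mapDomain (a :: ·) x := rfl

lemma Cns_single (a : ℕ+) (l : Idx) (c : ℚ) :
    Cns a (Finsupp.single l c) = Finsupp.single (a :: l) c := by
  rw [Cns_apply, Finsupp.mapDomain_single]

noncomputable def HP (u : Idx) : IdxAlg →ₗ[ℚ] IdxAlg :=
  Finsupp.lsum ℚ fun l => LinearMap.toSpanSingleton ℚ IdxAlg (hp u l)

lemma HP_single (u l : Idx) (c : ℚ) : HP u (Finsupp.single l c) = c • hp u l := by
  simp [HP]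

lemma HP_nil (x : IdxAlg) : HP [] x = x := by
  have h : HP [] = LinearMap.id (R := ℚ) (M := IdxAlg) := by
    apply Finsupp.lhom_ext
    intro l c
    simp [HP_single, hp_nil_left, Finsupp.smul_single]
  rw [h, LinearMap.id_apply]

lemma HP_emptystar (u : Idx) : HP u (Finsupp.single [] 1) = Finsupp.single u 1 := by
  rw [HP_single, hp_nil_right, one_smul]

lemma HP_cons_Cns (c : ℕ+) (t : Idx) (a : ℕ+) (x : IdxAlg) :
    HP (c :: t) (Cns a x) =
      Cns c (HP t (Cns a x)) + Cns a (HP (c :: t) x) + Cns (c + a) (HP t x) := by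
  have h : (HP (c :: t)).comp (Cns a) =
      (Cns c).comp ((HP t).comp (Cns a)) + (Cns a).comp (HP (c :: t)) +
        (Cns (c + a)).comp (HP t) := by
    apply Finsupp.lhom_ext
    intro l d
    simp only [LinearMap.comp_apply, LinearMap.add_apply, Cns_single, HP_single, map_smul]
    rw [hp_cons_cons, Cns_apply, Cns_apply, Cns_apply]
    simp [smul_add]
  exact LinearMap.congr_fun h x

lemma star_nil : starSym [] = Finsupp.single [] 1 := by rw [starSym]
lemma star_single (a : ℕ+) : starSym [a] = Finsupp.single [a] 1 := by rw [starSym]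
lemma star_cons_cons (a b : ℕ+) (t : Idx) :
    starSym (a :: b :: t) = Cns a (starSym (b :: t)) + starSym ((a + b) :: t) := by
  rw [starSym, Cns_apply]

lemma hmul_single (u : Idx) (v : IdxAlg) : hmul (Finsupp.single u 1) v = HP u v := by
  rw [hmul, Finsupp.sum_single_index]
  · simp only [one_mul]
    rw [HP, Finsupp.lsum_apply]
    rfl
  · simp

noncomputable def Fs (k : Idx) : IdxAlg :=
  ∑ i ∈ Finset.range (k.length + 1),
    ((-1 : ℚ) ^ (k.length - i)) • HP (k.take i) (starSym (k.drop i).reverse)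

noncomputable def Bs (w : Idx) (a : ℕ+) : IdxAlg :=
  ∑ i ∈ Finset.range (w.length + 1),
    ((-1 : ℚ) ^ (w.length - i)) • HP (w.take i) (Cns a (starSym (w.drop i).reverse))

lemma Fs_nil : Fs [] = Finsupp.single [] 1 := by
  simp [Fs, star_nil, HP_nil]

lemma Bs_nil (a : ℕ+) : Bs [] a = Finsupp.single [a] 1 := by
  simp [Bs, star_nil, Cns_single, HP_nil]

lemma Fs_single (a : ℕ+) : Fs [a] = 0 := by
  rw [Fs]
  rw [show ([a] : Idx).length = 1 from rfl]
  rw [Finset.sum_range_succ, Finset.sum_range_one]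
  simp [star_nil, star_single, HP_nil, HP_emptystar]

lemma Bs_cons (c : ℕ+) (w : Idx) (a : ℕ+) :
    Bs (c :: w) a = Cns c (Bs w a) + Cns a (Fs (c :: w)) + Cns (c + a) (Fs w) := by
  have hsplit : Fs (c :: w) =
      (∑ i ∈ Finset.range (w.length + 1),
        ((-1 : ℚ) ^ (w.length - i)) • HP (c :: w.take i) (starSym (w.drop i).reverse))
      + ((-1 : ℚ) ^ (w.length + 1)) • starSym (c :: w).reverse := by
    rw [Fs, List.length_cons, Finset.sum_range_succ']
    congr 1
    · apply Finset.sum_congr rfl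
      intro i _
      simp only [List.take_succ_cons, List.drop_succ_cons, Nat.add_sub_add_right]
    · simp [HP_nil]
  rw [Bs, List.length_cons, Finset.sum_range_succ']
  have hterm : ∀ i ∈ Finset.range (w.length + 1),
      ((-1 : ℚ) ^ (w.length + 1 - (i + 1))) •
        HP ((c :: w).take (i + 1)) (Cns a (starSym ((c :: w).drop (i + 1)).reverse)) =
      Cns c (((-1 : ℚ) ^ (w.length - i)) • HP (w.take i) (Cns a (starSym (w.drop i).reverse))) +
      Cns a (((-1 : ℚ) ^ (w.length - i)) • HP (c :: w.take i) (starSym (w.drop i).reverse)) +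
      Cns (c + a) (((-1 : ℚ) ^ (w.length - i)) • HP (w.take i) (starSym (w.drop i).reverse)) := by
    intro i _
    simp only [List.take_succ_cons, List.drop_succ_cons, Nat.add_sub_add_right, map_smul]
    rw [HP_cons_Cns, smul_add, smul_add]
  rw [Finset.sum_congr rfl hterm]
  rw [Finset.sum_add_distrib, Finset.sum_add_distrib]
  rw [← map_sum, ← map_sum, ← map_sum]
  have hB : (∑ i ∈ Finset.range (w.length + 1),
      ((-1 : ℚ) ^ (w.length - i)) • HP (w.take i) (Cns a (starSym (w.drop i).reverse))) = Bs w a :=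
    rfl
  have hF : (∑ i ∈ Finset.range (w.length + 1),
      ((-1 : ℚ) ^ (w.length - i)) • HP (w.take i) (starSym (w.drop i).reverse)) = Fs w := rfl
  have hX : (∑ i ∈ Finset.range (w.length + 1),
      ((-1 : ℚ) ^ (w.length - i)) • HP (c :: w.take i) (starSym (w.drop i).reverse))
      = Fs (c :: w) - ((-1 : ℚ) ^ (w.length + 1)) • starSym (c :: w).reverse := by
    rw [hsplit]; abel
  rw [hB, hF, hX]
  simp only [List.take_zero, List.drop_zero, Nat.sub_zero, HP_nil, map_sub, map_smul]
  abel

def mL : Idx → ℕ+ → Idx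
  | [], a => [a]
  | [b], a => [b + a]
  | b :: c :: t, a => b :: mL (c :: t) a

lemma mL_concat (t : Idx) (b a : ℕ+) : mL (t ++ [b]) a = t ++ [b + a] := by
  induction t with
  | nil => rfl
  | cons c s ih =>
    cases s with
    | nil => rfl
    | cons d r =>
      show mL (c :: ((d :: r) ++ [b])) a = c :: ((d :: r) ++ [b + a])
      rw [List.cons_append, mL, ← List.cons_append, ih]

lemma Fs_concat (t : Idx) (b a : ℕ+) :
    Fs (t ++ [b] ++ [a]) =
      Finsupp.single (t ++ [b] ++ [a]) 1 + Finsupp.single (t ++ [b + a]) 1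
        - Bs (t ++ [b]) a - Fs (t ++ [b + a]) := by
  have hlen : (t ++ [b] ++ [a]).length = t.length + 1 + 1 := by simp
  have hlenw : (t ++ [b]).length = t.length + 1 := by simp
  have hlenw' : (t ++ [b + a]).length = t.length + 1 := by simp
  -- Bs (t++[b]) a expanded
  have hBs : Bs (t ++ [b]) a =
      (∑ i ∈ Finset.range (t.length + 1),
        ((-1 : ℚ) ^ (t.length + 1 - i)) •
          HP (t.take i) (Cns a (starSym (b :: (t.drop i).reverse))))
      + HP (t ++ [b]) (Finsupp.single [a] 1) := by
    rw [Bs]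
    simp only [hlenw]
    rw [Finset.sum_range_succ]
    congr 1
    · apply Finset.sum_congr rfl
      intro i hi
      have hi' : i ≤ t.length := by
        simp only [Finset.mem_range] at hi; omega
      rw [List.take_append_of_le_length hi', List.drop_append_of_le_length hi',
        List.reverse_concat]
    · rw [Nat.sub_self, pow_zero, one_smul, ← hlenw, List.take_length, List.drop_length]
      simp only [List.reverse_nil, star_nil]
      rw [Cns_single]
  -- Fs (t++[b+a]) expanded
  have hFs' : Fs (t ++ [b + a]) =
      (∑ i ∈ Finset.range (t.length + 1),
        ((-1 : ℚ) ^ (t.length + 1 - i)) •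
          HP (t.take i) (starSym ((b + a) :: (t.drop i).reverse)))
      + Finsupp.single (t ++ [b + a]) 1 := by
    rw [Fs]
    simp only [hlenw']
    rw [Finset.sum_range_succ]
    congr 1
    · apply Finset.sum_congr rfl
      intro i hi
      have hi' : i ≤ t.length := by
        simp only [Finset.mem_range] at hi; omega
      rw [List.take_append_of_le_length hi', List.drop_append_of_le_length hi',
        List.reverse_concat]
    · rw [Nat.sub_self, pow_zero, one_smul, ← hlenw', List.take_length, List.drop_length]
      simp only [List.reverse_nil, star_nil]
      rw [HP_emptystar]
  -- expand the goal
  rw [Fs]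
  simp only [hlen]
  rw [Finset.sum_range_succ, Finset.sum_range_succ]
  have hterm : ∀ i ∈ Finset.range (t.length + 1),
      ((-1 : ℚ) ^ (t.length + 1 + 1 - i)) •
        HP ((t ++ [b] ++ [a]).take i) (starSym ((t ++ [b] ++ [a]).drop i).reverse) =
      -(((-1 : ℚ) ^ (t.length + 1 - i)) •
          HP (t.take i) (Cns a (starSym (b :: (t.drop i).reverse)))) +
      -(((-1 : ℚ) ^ (t.length + 1 - i)) •
          HP (t.take i) (starSym ((b + a) :: (t.drop i).reverse))) := by
    intro i hi
    have hi' : i ≤ t.length := by simp only [Finset.mem_range] at hi; omega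
    have hi'' : i ≤ (t ++ [b]).length := by rw [hlenw]; omega
    rw [List.take_append_of_le_length hi'', List.take_append_of_le_length hi',
      List.drop_append_of_le_length hi'', List.drop_append_of_le_length hi',
      List.reverse_concat, List.reverse_concat]
    rw [star_cons_cons, add_comm a b]
    have hs : ((-1 : ℚ) ^ (t.length + 1 + 1 - i)) = -((-1 : ℚ) ^ (t.length + 1 - i)) := by
      rw [show t.length + 1 + 1 - i = (t.length + 1 - i) + 1 from by omega, pow_succ]
      ring
    rw [hs, map_add, smul_add, neg_smul, neg_smul]
  rw [Finset.sum_congr rfl hterm]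
  rw [Finset.sum_add_distrib]
  rw [Finset.sum_neg_distrib, Finset.sum_neg_distrib]
  have h1 : (∑ i ∈ Finset.range (t.length + 1),
      ((-1 : ℚ) ^ (t.length + 1 - i)) •
        HP (t.take i) (Cns a (starSym (b :: (t.drop i).reverse))))
      = Bs (t ++ [b]) a - HP (t ++ [b]) (Finsupp.single [a] 1) := by
    rw [hBs]; abel
  have h2 : (∑ i ∈ Finset.range (t.length + 1),
      ((-1 : ℚ) ^ (t.length + 1 - i)) •
        HP (t.take i) (starSym ((b + a) :: (t.drop i).reverse)))
      = Fs (t ++ [b + a]) - Finsupp.single (t ++ [b + a]) 1 := by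
    rw [hFs']; abel
  rw [h1, h2]
  -- now the two peeled boundary terms
  have hp1 : ((-1 : ℚ) ^ (t.length + 1 + 1 - (t.length + 1))) •
      HP ((t ++ [b] ++ [a]).take (t.length + 1))
        (starSym ((t ++ [b] ++ [a]).drop (t.length + 1)).reverse) =
      -(HP (t ++ [b]) (Finsupp.single [a] 1)) := by
    rw [show t.length + 1 + 1 - (t.length + 1) = 1 from by omega, pow_one]
    rw [List.take_append_of_le_length (by rw [hlenw]), ← hlenw, List.take_length]
    rw [hlenw, List.drop_append_of_le_length (by rw [hlenw]), ← hlenw, List.drop_length]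
    simp only [List.nil_append, List.reverse_cons, List.reverse_nil]
    rw [star_single, neg_one_smul]
  have hp2 : ((-1 : ℚ) ^ (t.length + 1 + 1 - (t.length + 2))) •
      HP ((t ++ [b] ++ [a]).take (t.length + 2))
        (starSym ((t ++ [b] ++ [a]).drop (t.length + 2)).reverse) =
      Finsupp.single (t ++ [b] ++ [a]) 1 := by
    have e : t.length + 2 = (t ++ [b] ++ [a]).length := by simp
    rw [show t.length + 1 + 1 - (t.length + 2) = 0 from by omega, pow_zero, one_smul,
      e, List.take_length, List.drop_length]
    simp only [List.reverse_nil, star_nil]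
    rw [HP_emptystar]
  rw [hp1, hp2]
  abel

lemma Bs_val (n : ℕ) (Hq : ∀ k : Idx, k.length ≤ n → k ≠ [] → Fs k = 0) :
    ∀ w : Idx, w.length ≤ n → w ≠ [] → ∀ a : ℕ+,
      Bs w a = Finsupp.single (w ++ [a]) 1 + Finsupp.single (mL w a) 1 := by
  intro w
  induction w with
  | nil => intro _ h; exact absurd rfl h
  | cons c s ih =>
    intro hlen _ a
    rw [Bs_cons]
    rw [Hq (c :: s) hlen (by simp)]
    cases s with
    | nil =>
      rw [Bs_nil, Fs_nil]
      simp only [map_zero, Cns_single, add_zero]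
      rfl
    | cons d r =>
      rw [ih (by simp at hlen ⊢; omega) (by simp) a]
      rw [Hq (d :: r) (by simp at hlen ⊢; omega) (by simp)]
      simp only [map_zero, map_add, Cns_single, add_zero]
      rw [show mL (c :: d :: r) a = c :: mL (d :: r) a from by rw [mL]]
      rfl

lemma Fs_zero : ∀ (n : ℕ) (k : Idx), k.length ≤ n → k ≠ [] → Fs k = 0 := by
  intro n
  induction n with
  | zero =>
    intro k h hne
    exact absurd (List.eq_nil_of_length_eq_zero (Nat.le_zero.mp h)) hne
  | succ n ih =>
    intro k hlen hne
    rcases List.eq_nil_or_concat k with rfl | ⟨w, a, rfl⟩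
    · exact absurd rfl hne
    rw [List.concat_eq_append] at *
    rcases List.eq_nil_or_concat w with rfl | ⟨t, b, rfl⟩
    · simpa using Fs_single a
    rw [List.concat_eq_append] at *
    have hlt : t.length + 1 ≤ n := by simp at hlen; omega
    rw [Fs_concat]
    rw [Bs_val n ih (t ++ [b]) (by simp; omega) (by simp) a]
    rw [mL_concat]
    rw [ih (t ++ [b + a]) (by simp; omega) (by simp)]
    abel


/-- Antipode identity: for any index `k = (k₁,…,k_r)`,
`Σ_{i=0}^{r} (−1)^{r−i} [k₁,…,k_i] ∗ [k_r,…,k_{i+1}]^⋆` equals `[∅]` if `k = ∅`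
and `0` otherwise. -/
theorem antipode_identity (k : Idx) :
    ∑ i ∈ Finset.range (k.length + 1),
        ((-1 : ℚ) ^ (k.length - i)) •
          hmul (Finsupp.single (k.take i) 1) (starSym (k.drop i).reverse) =
      if k = [] then Finsupp.single [] 1 else 0 := by
  have hFs : (∑ i ∈ Finset.range (k.length + 1),
      ((-1 : ℚ) ^ (k.length - i)) •
        hmul (Finsupp.single (k.take i) 1) (starSym (k.drop i).reverse)) = Fs k := by
    rw [Fs]
    apply Finset.sum_congr rfl
    intro i _
    rw [hmul_single]
  rw [hFs]
  by_cases hk : k = []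
  · subst hk; rw [if_pos rfl, Fs_nil]
  · rw [if_neg hk]
    exact Fs_zero k.length k le_rfl hk
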